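/- arXiv:2508.14619 — 2 statements merged into one kernel-verified Lean document; each statement's English description precedes it below -/
import Mathlib

section
/- Let κ be an uncountable cardinal, let W be a κ-complete ultrafilter on the set of ordinals below κ, and let λ be a limit cardinal with κ < λ ≤ 2^κ and cf(λ) < κ. If ¬Gal(κ,W,α) holds for every cardinal α with κ < α < λ, then ¬Gal(κ,W,λ) holds. -/
universe u

open Cardinal

/-- `Gal U κ λ`: for every family of `λ` many members of `U` there is a
subfamily of size `κ` whose intersection is in `U`. -/
def Gal {X : Type u} (U : Filter X) (kappa lam : Cardinal.{u}) : Prop :=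
  ∀ A : lam.ord.ToType → Set X, (∀ i, A i ∈ U) →
    ∃ I : Set lam.ord.ToType, #I = kappa ∧ (⋂ i ∈ I, A i) ∈ U

/-- A filter is `κ`-complete if it is closed under intersections of
families of fewer than `κ` of its members. -/
def IsKappaComplete {X : Type u} (kappa : Cardinal.{u}) (U : Filter X) : Prop :=
  ∀ (ι : Type u) (s : ι → Set X), #ι < kappa → (∀ i, s i ∈ U) → (⋂ i, s i) ∈ U

/-- If `κ` is singular, a `κ`-complete filter is closed under intersections of
families of `κ` many members. -/
lemma kappaComplete_singular {X : Type u} {kappa : Cardinal.{u}} (h0 : ℵ₀ < kappa)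
    {W : Filter X} (hW : IsKappaComplete kappa W)
    (hsing : kappa.ord.cof < kappa)
    (ι : Type u) (s : ι → Set X) (hι : #ι ≤ kappa) (hs : ∀ i, s i ∈ W) :
    (⋂ i, s i) ∈ W := by
  obtain ⟨S, hUnb, hS⟩ :=
    Order.exists_cof_eq kappa.ord.ToType
  rw [Ordinal.cof_toType] at hS
  obtain ⟨g⟩ : Nonempty (ι ↪ kappa.ord.ToType) := by
    rw [← Cardinal.le_def, Cardinal.mk_ord_toType]; exact hι
  have hblock : ∀ x : S, (⋂ i : {i // g i ≤ x.val}, s i.val) ∈ W := by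
    intro x
    refine hW _ _ ?_ (fun i => hs i.val)
    calc #{i // g i ≤ x.val} ≤ #(Set.Iic x.val) := by
          refine ⟨⟨fun i => ⟨g i.val, i.2⟩, ?_⟩⟩
          intro a b hab
          have := congrArg Subtype.val hab
          exact Subtype.ext (g.injective this)
      _ ≤ #(Set.Iio x.val) + 1 := by
          rw [← Set.Iio_insert]; exact Cardinal.mk_insert_le
      _ < kappa :=
          Cardinal.add_lt_of_lt h0.le (Cardinal.mk_Iio_ord_toType _)
            (lt_trans Cardinal.one_lt_aleph0 h0)
  have hmain : (⋂ x : S, ⋂ i : {i // g i ≤ x.val}, s i.val) ∈ W :=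
    hW _ _ (by rw [hS]; exact hsing) hblock
  refine Filter.mem_of_superset hmain ?_
  intro y hy
  simp only [Set.mem_iInter] at hy ⊢
  intro i
  obtain ⟨b, hbS, hb⟩ := hUnb (g i)
  exact hy ⟨b, hbS⟩ ⟨i, hb⟩

/-- If `κ` is uncountable, `W` is a `κ`-complete ultrafilter on `κ`, and `λ` is a
limit cardinal with `κ < λ ≤ 2^κ` and `cf(λ) < κ`, and `¬Gal(κ,W,α)` holds for all
cardinals `α` with `κ < α < λ`, then `¬Gal(κ,W,λ)`. -/
theorem stmt4 (kappa lam : Cardinal.{u}) (h0 : ℵ₀ < kappa)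
    (W : Ultrafilter kappa.ord.ToType) (hW : IsKappaComplete kappa (W : Filter kappa.ord.ToType))
    (hlim : Order.IsSuccLimit lam) (hlt : kappa < lam) (hle : lam ≤ 2 ^ kappa)
    (hcof : lam.ord.cof < kappa)
    (hneg : ∀ a : Cardinal.{u}, kappa < a → a < lam →
      ¬ Gal (W : Filter kappa.ord.ToType) kappa a) :
    ¬ Gal (W : Filter kappa.ord.ToType) kappa lam := by
  have hk1 : kappa < Order.succ kappa := Order.lt_succ kappa
  have hk2 : Order.succ kappa < lam := hlim.succ_lt hlt
  by_cases hreg : kappa.IsRegular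
  · -- regular case
    intro hGal
    obtain ⟨S, hUnb, hS⟩ :=
      Order.exists_cof_eq lam.ord.ToType
    rw [Ordinal.cof_toType] at hS
    have hlaminf : ℵ₀ ≤ lam := h0.le.trans hlt.le
    set lamf : S → Cardinal.{u} :=
      fun x => max (#(Set.Iio x.val)) (Order.succ kappa) with hlamf
    have hlf1 : ∀ x : S, kappa < lamf x :=
      fun x => hk1.trans_le (le_max_right _ _)
    have hlf2 : ∀ x : S, lamf x < lam :=
      fun x => max_lt (Cardinal.mk_Iio_ord_toType _) hk2
    have hlfinf : ∀ x : S, ℵ₀ ≤ lamf x :=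
      fun x => (h0.le.trans hk1.le).trans (le_max_right _ _)
    have hIic : ∀ x : S, #(Set.Iic x.val) ≤ lamf x := by
      intro x
      calc #(Set.Iic x.val) ≤ #(Set.Iio x.val) + 1 := by
            rw [← Set.Iio_insert]; exact Cardinal.mk_insert_le
        _ ≤ lamf x := Cardinal.add_le_of_le (hlfinf x) (le_max_left _ _)
            (le_trans Cardinal.one_lt_aleph0.le (hlfinf x))
    have hsum : Cardinal.sum lamf = lam := by
      apply le_antisymm
      · calc Cardinal.sum lamf ≤ Cardinal.sum (fun _ : S => lam) :=
              Cardinal.sum_le_sum _ _ (fun x => (hlf2 x).le)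
          _ = #S * lam := Cardinal.sum_const' _ _
          _ ≤ lam * lam := by
              apply mul_le_mul_left
              rw [hS]; exact (hcof.trans hlt).le
          _ = lam := Cardinal.mul_eq_self hlaminf
      · have hcover : (⋃ x : S, Set.Iic x.val) = Set.univ := by
          ext y
          simp only [Set.mem_iUnion, Set.mem_univ, iff_true]
          obtain ⟨b, hbS, hb⟩ := hUnb y
          exact ⟨⟨b, hbS⟩, hb⟩
        calc lam = #(lam.ord.ToType) := (Cardinal.mk_ord_toType lam).symm
          _ = #(⋃ x : S, Set.Iic x.val) := by rw [hcover, Cardinal.mk_univ]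
          _ ≤ Cardinal.sum (fun x : S => #(Set.Iic x.val)) := Cardinal.mk_iUnion_le_sum_mk
          _ ≤ Cardinal.sum lamf := Cardinal.sum_le_sum _ _ hIic
    have hmk : #(lam.ord.ToType) = #(Σ x : S, ((lamf x).ord.ToType)) := by
      rw [Cardinal.mk_ord_toType, Cardinal.mk_sigma]
      simp_rw [Cardinal.mk_ord_toType]
      exact hsum.symm
    obtain ⟨e⟩ := Cardinal.eq.1 hmk
    have hbad : ∀ x : S, ∃ F : (lamf x).ord.ToType → Set kappa.ord.ToType,
        (∀ β, F β ∈ (W : Filter kappa.ord.ToType)) ∧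
        ∀ I : Set ((lamf x).ord.ToType), #I = kappa →
          (⋂ i ∈ I, F i) ∉ (W : Filter kappa.ord.ToType) := by
      intro x
      have h := hneg (lamf x) (hlf1 x) (hlf2 x)
      rw [Gal] at h; push_neg at h
      exact h
    choose F hF1 hF2 using hbad
    obtain ⟨I, hI, hIW⟩ := hGal (fun γ => F (e γ).1 (e γ).2) (fun γ => hF1 _ _)
    set J : ∀ x : S, Set ((lamf x).ord.ToType) :=
      fun x => {β | e.symm ⟨x, β⟩ ∈ I} with hJ
    have hsumJ : kappa ≤ Cardinal.sum (fun x : S => #(J x)) := by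
      rw [← hI, ← Cardinal.mk_sigma]
      refine ⟨⟨fun γ => ⟨(e γ.1).1, ⟨(e γ.1).2,
        show e.symm (e γ.1) ∈ I by simp [γ.2]⟩⟩, ?_⟩⟩
      intro a b hab
      have h2 := congrArg
        (fun p : Σ x : S, (J x) => (⟨p.1, p.2.1⟩ : Σ x : S, ((lamf x).ord.ToType))) hab
      exact Subtype.ext (e.injective h2)
    have hex : ∃ x : S, kappa ≤ #(J x) := by
      by_contra hno
      push_neg at hno
      exact absurd (hsumJ.trans_lt
        (Cardinal.sum_lt_of_isRegular hreg (by rw [hS]; exact hcof) hno)) (lt_irrefl _)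
    obtain ⟨x, hx⟩ := hex
    have hxle : #(J x) ≤ kappa := by
      rw [← hI]
      refine ⟨⟨fun β => ⟨e.symm ⟨x, β.1⟩, β.2⟩, ?_⟩⟩
      intro a b hab
      have h2 := e.symm.injective (congrArg Subtype.val hab)
      exact Subtype.ext (by simpa using h2)
    refine hF2 x (J x) (le_antisymm hxle hx) (Filter.mem_of_superset hIW ?_)
    intro y hy
    simp only [Set.mem_iInter] at hy ⊢
    intro β hβ
    have h3 := hy (e.symm ⟨x, β⟩) hβ
    have h4 : e (e.symm (⟨x, β⟩ : Σ x : S, ((lamf x).ord.ToType))) = ⟨x, β⟩ :=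
      e.apply_symm_apply _
    rw [h4] at h3
    exact h3
  · -- singular case
    have hsing : kappa.ord.cof < kappa := not_le.1 (fun h => hreg ⟨h0.le, h⟩)
    intro _
    refine hneg (Order.succ kappa) hk1 hk2 ?_
    intro A hA
    have hle' : kappa ≤ #((Order.succ kappa).ord.ToType) := by
      rw [Cardinal.mk_ord_toType]; exact hk1.le
    obtain ⟨I, hI⟩ := Cardinal.le_mk_iff_exists_set.1 hle'
    refine ⟨I, hI, ?_⟩
    rw [Set.biInter_eq_iInter]
    exact kappaComplete_singular h0 hW hsing _ _ (by rw [hI]) (fun i => hA i)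
end

section
/- Let κ be an uncountable regular cardinal, let W be a κ-complete nonprincipal ultrafilter on the set of ordinals below κ, and let λ be a limit cardinal with κ < λ ≤ 2^κ and cf(λ) = κ. If ¬Gal(κ,W,α) holds for every cardinal α with κ < α < λ, then ¬Gal(κ,W,λ) holds. -/
universe u

open Cardinal

/-- If `κ` is uncountable regular, `W` is a `κ`-complete nonprincipal ultrafilter on `κ`, and `λ` is a
limit cardinal with `κ < λ ≤ 2^κ` and `cf(λ) = κ`, and `¬Gal(κ,W,α)` holds for all
cardinals `α` with `κ < α < λ`, then `¬Gal(κ,W,λ)`. -/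
theorem stmt5 (kappa lam : Cardinal.{u}) (h0 : ℵ₀ < kappa) (hreg : kappa.IsRegular)
    (W : Ultrafilter kappa.ord.ToType) (hW : IsKappaComplete kappa (W : Filter kappa.ord.ToType))
    (hnp : ∀ x : kappa.ord.ToType, {x} ∉ W)
    (hlim : Order.IsSuccLimit lam) (hlt : kappa < lam) (hle : lam ≤ 2 ^ kappa)
    (hcof : lam.ord.cof = kappa)
    (hneg : ∀ a : Cardinal.{u}, kappa < a → a < lam →
      ¬ Gal (W : Filter kappa.ord.ToType) kappa a) :
    ¬ Gal (W : Filter kappa.ord.ToType) kappa lam := by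
  intro hGal
  have haleph_lam : ℵ₀ < lam := h0.trans hlt
  have hXcard : #(kappa.ord.ToType) = kappa := by
    rw [Cardinal.mk_toType, Cardinal.card_ord]
  -- small sets (bounded in an `Iic`) are small
  have hIic : ∀ i : kappa.ord.ToType, #(Set.Iic i) < kappa := by
    intro i
    have h1 : #(Set.Iio i) < kappa := Cardinal.mk_Iio_ord_toType i
    have h2 : #(Set.Iic i) ≤ #(Set.Iio i) + 1 := by
      rw [← Set.Iio_insert]
      exact Cardinal.mk_insert_le
    exact h2.trans_lt (Cardinal.add_lt_of_lt h0.le h1 (lt_trans one_lt_aleph0 h0))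
  -- tail sets belong to W
  have htail : ∀ i : kappa.ord.ToType, {x | i < x} ∈ W := by
    intro i
    have h2 : (⋂ x : (Set.Iic i), ({(x : kappa.ord.ToType)}ᶜ : Set kappa.ord.ToType)) ∈ W := by
      refine hW _ _ (hIic i) fun x => ?_
      exact (Ultrafilter.compl_mem_iff_notMem).2 (hnp x)
    have h3 : {x | i < x} =
        ⋂ x : (Set.Iic i), ({(x : kappa.ord.ToType)}ᶜ : Set kappa.ord.ToType) := by
      ext z
      simp only [Set.mem_setOf_eq, Set.mem_iInter, Set.mem_compl_iff, Set.mem_singleton_iff]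
      constructor
      · rintro hz ⟨x, hx⟩ rfl
        exact absurd hz (not_lt.2 hx)
      · intro hz
        by_contra hle'
        exact hz ⟨z, not_lt.1 hle'⟩ rfl
    rw [h3]; exact h2
  -- sets of size κ are unbounded
  have hunb : ∀ S : Set kappa.ord.ToType, kappa ≤ #S →
      ∀ b : kappa.ord.ToType, ∃ j ∈ S, b < j := by
    intro S hS b
    by_contra hcon
    push_neg at hcon
    have hsub : S ⊆ Set.Iic b := fun j hj => hcon j hj
    exact absurd (hS.trans (Cardinal.mk_le_mk_of_subset hsub)) (not_le.2 (hIic b))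
  -- cofinal sequence
  obtain ⟨ι, f, hlsub, hι⟩ := Ordinal.exists_lsub_cof lam.ord
  rw [hcof] at hι
  obtain ⟨e⟩ := Cardinal.eq.1 (hι.trans hXcard.symm)
  have hflt : ∀ j : ι, f j < lam.ord := fun j => hlsub ▸ Ordinal.lt_lsub f j
  set g : kappa.ord.ToType → Ordinal.{u} :=
    fun i => max (Order.succ (f (e.symm i))) (Order.succ kappa).ord with hgdef
  have hcard_lt_lam : ∀ o : Ordinal.{u}, o < lam.ord → (Order.succ o).card < lam := by
    intro o ho
    rw [Ordinal.card_succ]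
    exact Cardinal.add_lt_of_lt haleph_lam.le (Cardinal.lt_ord.1 ho)
      (lt_trans one_lt_aleph0 haleph_lam)
  have hg_lt : ∀ i, g i < lam.ord := by
    intro i
    apply max_lt
    · rw [Cardinal.lt_ord]
      exact hcard_lt_lam _ (hflt _)
    · rw [Cardinal.ord_lt_ord]
      exact hlim.succ_lt hlt
  have hg_card_lt : ∀ i, (g i).card < lam := fun i => Cardinal.lt_ord.1 (hg_lt i)
  have hg_card_gt : ∀ i, kappa < (g i).card := by
    intro i
    have h1 : (Order.succ kappa).ord ≤ g i := le_max_right _ _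
    have h2 : Order.succ kappa ≤ (g i).card := by
      rw [← Cardinal.card_ord (Order.succ kappa)]
      exact Ordinal.card_le_card h1
    exact (Order.lt_succ kappa).trans_le h2
  have hg_unb : ∀ o : Ordinal.{u}, o < lam.ord → ∃ i, o < g i := by
    intro o ho
    rw [← hlsub, Ordinal.lt_lsub_iff] at ho
    obtain ⟨j, hj⟩ := ho
    refine ⟨e j, lt_of_lt_of_le ?_ (le_max_left _ _)⟩
    rw [e.symm_apply_apply]
    exact hj.trans_lt (Order.lt_succ _)
  -- bad families
  have hbad : ∀ i : kappa.ord.ToType,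
      ∃ B : ((g i).card).ord.ToType → Set kappa.ord.ToType,
        (∀ b, B b ∈ W) ∧ ∀ J : Set ((g i).card).ord.ToType, #J = kappa →
          (⋂ b ∈ J, B b) ∉ W := by
    intro i
    have h := hneg (g i).card (hg_card_gt i) (hg_card_lt i)
    unfold Gal at h
    push_neg at h
    obtain ⟨B, hB1, hB2⟩ := h
    exact ⟨B, hB1, hB2⟩
  choose B hB1 hB2 using hbad
  -- equivalences onto the bad families' index types
  have hcardeq : ∀ i : kappa.ord.ToType,
      #((g i).ToType) = #(((g i).card).ord.ToType) := by
    intro i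
    rw [Cardinal.mk_toType, Cardinal.mk_toType, Cardinal.card_ord]
  have eqv : ∀ i : kappa.ord.ToType, (g i).ToType ≃ ((g i).card).ord.ToType :=
    fun i => Classical.choice (Cardinal.eq.1 (hcardeq i))
  -- indexing of lam.ord.ToType
  set to_ord : lam.ord.ToType → Ordinal.{u} :=
    fun y => ((Ordinal.ToType.mk (o := lam.ord)).symm y : Ordinal) with hto_def
  have hto_lt : ∀ y, to_ord y < lam.ord := fun y => ((Ordinal.ToType.mk (o := lam.ord)).symm y).2
  have hto_inj : Function.Injective to_ord := by
    intro y1 y2 h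
    have := Subtype.ext h (p := fun o => o < lam.ord)
    exact (Ordinal.ToType.mk (o := lam.ord)).symm.injective this
  choose idx hidx using fun y : lam.ord.ToType => hg_unb (to_ord y) (hto_lt y)
  set embJ : ∀ j : kappa.ord.ToType, ∀ y : lam.ord.ToType,
      to_ord y < g j → ((g j).card).ord.ToType :=
    fun j y h => eqv j ((Ordinal.ToType.mk (o := (g j))) ⟨to_ord y, h⟩) with hembJ_def
  have embJ_inj : ∀ j y1 y2 h1 h2, embJ j y1 h1 = embJ j y2 h2 → y1 = y2 := by
    intro j y1 y2 h1 h2 h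
    have h' := (eqv j).injective h
    have h'' := (Ordinal.ToType.mk (o := (g j))).injective h'
    have h3 := Subtype.mk_eq_mk.1 h''
    exact hto_inj h3
  set A : lam.ord.ToType → Set kappa.ord.ToType :=
    fun y => B (idx y) (embJ (idx y) y (hidx y)) ∩ {x | idx y < x} with hA_def
  have hA : ∀ y, A y ∈ W := fun y => Filter.inter_mem (hB1 _ _) (htail _)
  obtain ⟨I, hIcard, hIW⟩ := hGal A hA
  -- case split on fibers of idx on I
  by_cases hc : ∃ j : kappa.ord.ToType, kappa ≤ #({y | y ∈ I ∧ idx y = j} : Set lam.ord.ToType)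
  · -- some fiber has size κ
    obtain ⟨j, hj⟩ := hc
    obtain ⟨F, hFsub, hFcard⟩ := Cardinal.le_mk_iff_exists_subset.1 hj
    have hFlt : ∀ y : lam.ord.ToType, y ∈ F → to_ord y < g j := by
      intro y hy
      have h2 := (hFsub hy).2
      rw [← h2]
      exact hidx y
    set m : F → ((g j).card).ord.ToType := fun y => embJ j y.1 (hFlt y.1 y.2) with hm_def
    have hm_inj : Function.Injective m := by
      intro y1 y2 h
      exact Subtype.ext (embJ_inj j y1.1 y2.1 _ _ h)
    have hJcard : #(Set.range m) = kappa := by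
      rw [Cardinal.mk_range_eq m hm_inj, hFcard]
    have hkey : ∀ y : lam.ord.ToType, ∀ hy : y ∈ F, A y ⊆ B j (m ⟨y, hy⟩) := by
      intro y hy
      have hidxy : idx y = j := (hFsub hy).2
      have heq : B (idx y) (embJ (idx y) y (hidx y)) = B j (embJ j y (hFlt y hy)) := by
        have hgen : ∀ (j' : kappa.ord.ToType) (h' : idx y = j') (hlt' : to_ord y < g j'),
            B (idx y) (embJ (idx y) y (hidx y)) = B j' (embJ j' y hlt') := by
          intro j' h' hlt'
          subst h'
          rfl
        exact hgen j hidxy (hFlt y hy)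
      intro x hx
      show x ∈ B j (embJ j y (hFlt y hy))
      rw [← heq]
      exact hx.1
    have hmem : (⋂ b ∈ Set.range m, B j b) ∈ W := by
      refine Filter.mem_of_superset hIW ?_
      intro x hx
      simp only [Set.mem_iInter] at hx ⊢
      rintro b ⟨y, rfl⟩
      exact hkey y.1 y.2 (hx y.1 (hFsub y.2).1)
    exact hB2 j (Set.range m) hJcard hmem
  · -- all fibers small: the image of idx is unbounded
    push_neg at hc
    set R : Set kappa.ord.ToType := idx '' I with hR_def
    have hRcard : kappa ≤ #R := by
      by_contra hRlt
      push_neg at hRlt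
      have hcover : I ⊆ ⋃ j : R, {y | y ∈ I ∧ idx y = (j : kappa.ord.ToType)} := by
        intro y hy
        exact Set.mem_iUnion.2 ⟨⟨idx y, ⟨y, hy, rfl⟩⟩, hy, rfl⟩
      have h1 : #I ≤ #R * ⨆ j : R, #({y | y ∈ I ∧ idx y = (j : kappa.ord.ToType)} :
          Set lam.ord.ToType) :=
        (Cardinal.mk_le_mk_of_subset hcover).trans (Cardinal.mk_iUnion_le _)
      have h2 : (⨆ j : R, #({y | y ∈ I ∧ idx y = (j : kappa.ord.ToType)} :
          Set lam.ord.ToType)) < kappa :=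
        Cardinal.iSup_lt_of_isRegular hreg hRlt fun j => hc j
      have h3 : #I < kappa := h1.trans_lt (Cardinal.mul_lt_of_lt hreg.aleph0_le hRlt h2)
      rw [hIcard] at h3
      exact absurd h3 (lt_irrefl _)
    have hempty : (⋂ y ∈ I, A y) = ∅ := by
      ext x
      simp only [Set.mem_iInter, Set.mem_empty_iff_false, iff_false]
      intro hx
      obtain ⟨j, hjR, hxj⟩ := hunb R hRcard x
      obtain ⟨y, hyI, hyj⟩ := hjR
      have := (hx y hyI).2
      rw [hyj] at this
      exact absurd (hxj.trans this) (lt_irrefl x)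
    rw [hempty] at hIW
    exact Filter.empty_notMem (W : Filter kappa.ord.ToType) hIW
end
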